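/- Let u : [0,ε] × [T, T+δ] → ℝ be continuous, C² in x and C¹ in t on the interior, satisfying u_t = u_xx / (1 + (u_x)²). If u(x,T) ≥ 0 for all x ∈ [0,ε], u(0,t) > 0 for all t ∈ (T, T+δ], and u(ε,t) > 0 for all t ∈ [T, T+δ], then u(x,t) > 0 for all (x,t) ∈ (0,ε) × (T, T+δ]. -/

import Mathlib

open Set Filter Topology

/-!
Barrier argument. Fix `(x₀, t₀)` and let `m > 0` bound `u(ε, ·)` from below. With
`γ (t₀ - T) = β ε`, the function `w = A (exp (β x + γ (t - t₀)) - 1)` is `≤ 0` on the bottom and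
left side of `[0, ε] × [T, t₀]` and `≤ m` on the right side; for `β` large and `A` small it is a
strict subsolution, `w_t < w_xx / (1 + w_x²)`. At a negative minimum of `u - w` off the parabolic
boundary we would have `u_x = w_x`, `u_xx ≥ w_xx` and `u_t ≤ w_t`, which the equation forbids.
Hence `u ≥ w`, and `w (x₀, t₀) = A (exp (β x₀) - 1) > 0`.
-/

/-- If `f'' a < 0`, the second-derivative test makes `a` a local maximum as well, so `f` is
locally constant and `f'' a = 0`. -/
theorem IsLocalMin.deriv_deriv_nonneg {f : ℝ → ℝ} {a : ℝ} (h : IsLocalMin f a)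
    (hc : ContinuousAt f a) : 0 ≤ deriv (deriv f) a := by
  by_contra! hneg
  have hmax := isLocalMax_of_deriv_deriv_neg hneg h.deriv_eq_zero hc
  have hconst : f =ᶠ[𝓝 a] fun _ => f a := (h.and hmax).mono fun x hx => le_antisymm hx.2 hx.1
  have hflat : deriv f =ᶠ[𝓝 a] fun _ => 0 :=
    hconst.eventuallyEq_nhds.mono fun x hx => hx.deriv_eq.trans (deriv_const x (f a))
  simp [hflat.deriv_eq] at hneg

theorem IsLocalMinOn.deriv_nonpos_of_Iic {f : ℝ → ℝ} {b : ℝ} (h : IsLocalMinOn f (Iic b) b)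
    (hf : DifferentiableAt ℝ f b) : deriv f b ≤ 0 := by
  have hdir : (-1 : ℝ) ∈ posTangentConeAt (Iic b) b :=
    mem_posTangentConeAt_of_segment_subset (by
      rw [segment_symm, segment_eq_Icc (by linarith)]; exact Icc_subset_Iic_self)
  simpa using h.hasFDerivWithinAt_nonneg hf.hasDerivAt.hasFDerivAt.hasFDerivWithinAt hdir

section MinOfDifference

variable {f g : ℝ → ℝ} {a : ℝ}

theorem IsLocalMin.deriv_eq_of_sub (h : IsLocalMin (fun x => f x - g x) a)
    (hf : DifferentiableAt ℝ f a) (hg : DifferentiableAt ℝ g a) : deriv f a = deriv g a := by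
  have := h.deriv_eq_zero
  rw [deriv_fun_sub hf hg] at this
  linarith

theorem IsLocalMin.deriv_deriv_le_of_sub (h : IsLocalMin (fun x => f x - g x) a)
    (hf : ContDiffAt ℝ 2 f a) (hg : ContDiffAt ℝ 2 g a) :
    deriv (deriv g) a ≤ deriv (deriv f) a := by
  have hdiff : ∀ᶠ x in 𝓝 a, DifferentiableAt ℝ f x ∧ DifferentiableAt ℝ g x :=
    ((hf.eventually (by simp)).and (hg.eventually (by simp))).mono fun x hx =>
      ⟨hx.1.differentiableAt (by simp), hx.2.differentiableAt (by simp)⟩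
  have hderiv : deriv (fun x => f x - g x) =ᶠ[𝓝 a] fun x => deriv f x - deriv g x :=
    hdiff.mono fun x hx => deriv_fun_sub hx.1 hx.2
  have h2f : DifferentiableAt ℝ (deriv f) a :=
    (hf.derivWithin (m := 1) (by norm_num)).differentiableAt (by simp)
  have h2g : DifferentiableAt ℝ (deriv g) a :=
    (hg.derivWithin (m := 1) (by norm_num)).differentiableAt (by simp)
  have := h.deriv_deriv_nonneg (hf.continuousAt.sub hg.continuousAt)
  rw [hderiv.deriv_eq, deriv_fun_sub h2f h2g] at this
  linarith

theorem IsLocalMinOn.deriv_le_of_sub_Iic (h : IsLocalMinOn (fun x => f x - g x) (Iic a) a)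
    (hf : DifferentiableAt ℝ f a) (hg : DifferentiableAt ℝ g a) : deriv f a ≤ deriv g a := by
  have := h.deriv_nonpos_of_Iic (hf.sub hg)
  rw [deriv_fun_sub hf hg] at this
  linarith

end MinOfDifference

theorem le_of_strictSubsolution {F : ℝ → ℝ → ℝ} (hF : ∀ p, Monotone (F p))
    {u w : ℝ → ℝ → ℝ} {a b T τ : ℝ}
    (hu : ContinuousOn (fun p : ℝ × ℝ => u p.1 p.2) (Icc a b ×ˢ Icc T τ))
    (hw : ContinuousOn (fun p : ℝ × ℝ => w p.1 p.2) (Icc a b ×ˢ Icc T τ))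
    (hux : ∀ t ∈ Ioc T τ, ContDiffOn ℝ 2 (fun y => u y t) (Ioo a b))
    (hwx : ∀ t ∈ Ioc T τ, ContDiffOn ℝ 2 (fun y => w y t) (Ioo a b))
    (hut : ∀ x ∈ Ioo a b, ∀ t ∈ Ioc T τ, DifferentiableAt ℝ (fun s => u x s) t)
    (hwt : ∀ x ∈ Ioo a b, ∀ t ∈ Ioc T τ, DifferentiableAt ℝ (fun s => w x s) t)
    (hsol : ∀ x ∈ Ioo a b, ∀ t ∈ Ioc T τ, deriv (fun s => u x s) t =
      F (deriv (fun y => u y t) x) (deriv (deriv (fun y => u y t)) x))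
    (hsub : ∀ x ∈ Ioo a b, ∀ t ∈ Ioc T τ, deriv (fun s => w x s) t <
      F (deriv (fun y => w y t) x) (deriv (deriv (fun y => w y t)) x))
    (hbot : ∀ x ∈ Icc a b, w x T ≤ u x T)
    (hleft : ∀ t ∈ Icc T τ, w a t ≤ u a t)
    (hright : ∀ t ∈ Icc T τ, w b t ≤ u b t) :
    ∀ x ∈ Icc a b, ∀ t ∈ Icc T τ, w x t ≤ u x t := by
  intro x hx t ht
  by_contra! hlt
  obtain ⟨⟨xs, ts⟩, ⟨⟨hxa, hxb⟩, hTt, htτ⟩, hmin⟩ :=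
    (isCompact_Icc.prod isCompact_Icc).exists_isMinOn ⟨(x, t), hx, ht⟩ (hu.sub hw)
  replace hmin : ∀ p ∈ Icc a b ×ˢ Icc T τ, u xs ts - w xs ts ≤ u p.1 p.2 - w p.1 p.2 :=
    isMinOn_iff.1 hmin
  have hneg : u xs ts - w xs ts < 0 := (hmin (x, t) ⟨hx, ht⟩).trans_lt (sub_neg.2 hlt)
  have hxs : xs ∈ Ioo a b := by
    refine ⟨hxa.lt_of_ne ?_, hxb.lt_of_ne ?_⟩ <;> rintro rfl
    · linarith [hleft ts ⟨hTt, htτ⟩]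
    · linarith [hright ts ⟨hTt, htτ⟩]
  have hts : ts ∈ Ioc T τ := by
    refine ⟨hTt.lt_of_ne ?_, htτ⟩
    rintro rfl
    linarith [hbot xs ⟨hxa, hxb⟩]
  have hxs_nhds : Ioo a b ∈ 𝓝 xs := Ioo_mem_nhds hxs.1 hxs.2
  have hxmin : IsLocalMin (fun y => u y ts - w y ts) xs :=
    mem_of_superset hxs_nhds fun y hy => hmin (y, ts) ⟨Ioo_subset_Icc_self hy, hTt, htτ⟩
  have htmin : IsLocalMinOn (fun s => u xs s - w xs s) (Iic ts) ts :=
    mem_of_superset (Ioc_mem_nhdsLE hts.1) fun s hs =>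
      hmin (xs, s) ⟨⟨hxa, hxb⟩, hs.1.le, hs.2.trans htτ⟩
  have hux₂ := (hux ts hts).contDiffAt hxs_nhds
  have hwx₂ := (hwx ts hts).contDiffAt hxs_nhds
  have hslope := hxmin.deriv_eq_of_sub (hux₂.differentiableAt (by simp))
    (hwx₂.differentiableAt (by simp))
  have hcurv := hxmin.deriv_deriv_le_of_sub hux₂ hwx₂
  have htime := htmin.deriv_le_of_sub_Iic (hut xs hxs ts hts) (hwt xs hxs ts hts)
  have hsub' := hsub xs hxs ts hts
  rw [← hslope] at hsub'
  refine lt_irrefl (deriv (fun s => u xs s) ts) ?_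
  calc deriv (fun s => u xs s) ts ≤ deriv (fun s => w xs s) ts := htime
    _ < F (deriv (fun y => u y ts) xs) (deriv (deriv fun y => w y ts) xs) := hsub'
    _ ≤ F (deriv (fun y => u y ts) xs) (deriv (deriv fun y => u y ts) xs) := hF _ hcurv
    _ = deriv (fun s => u xs s) ts := (hsol xs hxs ts hts).symm

theorem le_of_strictSubsolution_of_Ioo {F : ℝ → ℝ → ℝ} (hF : ∀ p, Monotone (F p))
    {u w : ℝ → ℝ → ℝ} {a b T τ : ℝ}
    (hu : ContinuousOn (fun p : ℝ × ℝ => u p.1 p.2) (Icc a b ×ˢ Icc T τ))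
    (hw : ContinuousOn (fun p : ℝ × ℝ => w p.1 p.2) (Icc a b ×ˢ Icc T τ))
    (hux : ∀ t ∈ Ioo T τ, ContDiffOn ℝ 2 (fun y => u y t) (Ioo a b))
    (hwx : ∀ t ∈ Ioo T τ, ContDiffOn ℝ 2 (fun y => w y t) (Ioo a b))
    (hut : ∀ x ∈ Ioo a b, ∀ t ∈ Ioo T τ, DifferentiableAt ℝ (fun s => u x s) t)
    (hwt : ∀ x ∈ Ioo a b, ∀ t ∈ Ioo T τ, DifferentiableAt ℝ (fun s => w x s) t)
    (hsol : ∀ x ∈ Ioo a b, ∀ t ∈ Ioo T τ, deriv (fun s => u x s) t =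
      F (deriv (fun y => u y t) x) (deriv (deriv (fun y => u y t)) x))
    (hsub : ∀ x ∈ Ioo a b, ∀ t ∈ Ioo T τ, deriv (fun s => w x s) t <
      F (deriv (fun y => w y t) x) (deriv (deriv (fun y => w y t)) x))
    (hbot : ∀ x ∈ Icc a b, w x T ≤ u x T)
    (hleft : ∀ t ∈ Icc T τ, w a t ≤ u a t)
    (hright : ∀ t ∈ Icc T τ, w b t ≤ u b t) :
    ∀ x ∈ Icc a b, ∀ t ∈ Icc T τ, w x t ≤ u x t := by
  have hbefore : ∀ s ∈ Ico T τ, ∀ x ∈ Icc a b, w x s ≤ u x s := by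
    intro s hs x hx
    have hsub_Ioo : Ioc T s ⊆ Ioo T τ := fun t ht => ⟨ht.1, ht.2.trans_lt hs.2⟩
    have hsub_Icc : Icc T s ⊆ Icc T τ := Icc_subset_Icc_right hs.2.le
    exact le_of_strictSubsolution hF (hu.mono (prod_mono_right hsub_Icc))
      (hw.mono (prod_mono_right hsub_Icc)) (fun t ht => hux t (hsub_Ioo ht))
      (fun t ht => hwx t (hsub_Ioo ht)) (fun x hx t ht => hut x hx t (hsub_Ioo ht))
      (fun x hx t ht => hwt x hx t (hsub_Ioo ht)) (fun x hx t ht => hsol x hx t (hsub_Ioo ht))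
      (fun x hx t ht => hsub x hx t (hsub_Ioo ht)) hbot (fun t ht => hleft t (hsub_Icc ht))
      (fun t ht => hright t (hsub_Icc ht)) x hx s ⟨hs.1, le_rfl⟩
  intro x hx t ht
  rcases ht.1.eq_or_lt with rfl | hTt
  · exact hbot x hx
  rcases ht.2.lt_or_eq with htτ | rfl
  · exact hbefore t ⟨ht.1, htτ⟩ x hx
  have hslice : Icc T t ⊆ (fun s => (x, s)) ⁻¹' (Icc a b ×ˢ Icc T t) := fun s hs => ⟨hx, hs⟩
  have hu_slice := (hu.comp (Continuous.prodMk_right x).continuousOn hslice) t ht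
  have hw_slice := (hw.comp (Continuous.prodMk_right x).continuousOn hslice) t ht
  exact ContinuousWithinAt.closure_le (by rw [closure_Ico hTt.ne]; exact ht)
    (hw_slice.mono Ico_subset_Icc_self) (hu_slice.mono Ico_subset_Icc_self)
    fun s hs => hbefore s hs x hx

noncomputable def csfBarrier (A β γ t₀ x t : ℝ) : ℝ := A * (Real.exp (β * x + γ * (t - t₀)) - 1)

section CsfBarrier

variable {A β γ t₀ : ℝ}

theorem hasDerivAt_csfBarrier_space (x t : ℝ) :
    HasDerivAt (fun y => csfBarrier A β γ t₀ y t)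
      (A * β * Real.exp (β * x + γ * (t - t₀))) x := by
  have := ((((hasDerivAt_id' x).const_mul β).add_const (γ * (t - t₀))).exp.sub_const 1).const_mul A
  exact this.congr_deriv (by ring)

theorem hasDerivAt_csfBarrier_time (x t : ℝ) :
    HasDerivAt (fun s => csfBarrier A β γ t₀ x s)
      (A * γ * Real.exp (β * x + γ * (t - t₀))) t := by
  have := (((((hasDerivAt_id' t).sub_const t₀).const_mul γ).const_add (β * x)).exp.sub_const
    1).const_mul A
  exact this.congr_deriv (by ring)

theorem deriv_deriv_csfBarrier_space (x t : ℝ) :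
    deriv (deriv (fun y => csfBarrier A β γ t₀ y t)) x
      = A * β ^ 2 * Real.exp (β * x + γ * (t - t₀)) := by
  have hderiv : deriv (fun y => csfBarrier A β γ t₀ y t)
      = fun y => A * β * Real.exp (β * y + γ * (t - t₀)) :=
    funext fun y => (hasDerivAt_csfBarrier_space y t).deriv
  have := ((((hasDerivAt_id' x).const_mul β).add_const (γ * (t - t₀))).exp).const_mul (A * β)
  rw [hderiv, this.deriv]; ring

theorem csfBarrier_strictSubsolution {c x t : ℝ} (hA : 0 < A) (hβ : 0 ≤ β) (hγ : 0 ≤ γ)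
    (hc : γ * (1 + c ^ 2) < β ^ 2) (hslope : A * β * Real.exp (β * x + γ * (t - t₀)) ≤ c) :
    deriv (fun s => csfBarrier A β γ t₀ x s) t <
      deriv (deriv (fun y => csfBarrier A β γ t₀ y t)) x /
        (1 + deriv (fun y => csfBarrier A β γ t₀ y t) x ^ 2) := by
  rw [(hasDerivAt_csfBarrier_time x t).deriv, deriv_deriv_csfBarrier_space,
    (hasDerivAt_csfBarrier_space x t).deriv]
  set E := Real.exp (β * x + γ * (t - t₀))
  have hAE : 0 < A * E := mul_pos hA (Real.exp_pos _)
  have hslope_sq : (A * β * E) ^ 2 ≤ c ^ 2 := pow_le_pow_left₀ (by positivity) hslope 2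
  have hγβ : γ * (1 + (A * β * E) ^ 2) < β ^ 2 := by
    nlinarith [mul_le_mul_of_nonneg_left hslope_sq hγ]
  rw [lt_div_iff₀ (by positivity)]
  calc A * γ * E * (1 + (A * β * E) ^ 2) = A * E * (γ * (1 + (A * β * E) ^ 2)) := by ring
    _ < A * E * β ^ 2 := mul_lt_mul_of_pos_left hγβ hAE
    _ = A * β ^ 2 * E := by ring

theorem csfBarrier_nonpos (hA : 0 ≤ A) {x t : ℝ} (h : β * x + γ * (t - t₀) ≤ 0) :
    csfBarrier A β γ t₀ x t ≤ 0 :=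
  mul_nonpos_of_nonneg_of_nonpos hA (sub_nonpos.2 (Real.exp_le_one_iff.2 h))

end CsfBarrier

theorem exists_csfBarrier {ε T t₀ m : ℝ} (hε : 0 ≤ ε) (hT : T < t₀) (hm : 0 < m) :
    ∃ A β γ : ℝ,
      (∀ x ≤ ε, csfBarrier A β γ t₀ x T ≤ 0) ∧
      (∀ t ≤ t₀, csfBarrier A β γ t₀ 0 t ≤ 0) ∧
      (∀ t ≤ t₀, csfBarrier A β γ t₀ ε t ≤ m) ∧
      (∀ x ≤ ε, ∀ t ≤ t₀, deriv (fun s => csfBarrier A β γ t₀ x s) t <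
        deriv (deriv (fun y => csfBarrier A β γ t₀ y t)) x /
          (1 + deriv (fun y => csfBarrier A β γ t₀ y t) x ^ 2)) ∧
      (∀ x, 0 < x → 0 < csfBarrier A β γ t₀ x t₀) := by
  have hT' : 0 < t₀ - T := sub_pos.2 hT
  -- `β - 1` makes `γ (1 + m²) = β (β - 1) < β²`; `A` makes the slope `A β exp (β ε)` equal `m`
  set β := 1 + ε * (1 + m ^ 2) / (t₀ - T)
  set γ := β * ε / (t₀ - T)
  set A := m / (β * Real.exp (β * ε))
  have hβ : 1 ≤ β := le_add_of_nonneg_right (by positivity)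
  have hγ : 0 ≤ γ := by positivity
  have hA : 0 < A := by positivity
  have hγT : γ * (t₀ - T) = β * ε := div_mul_cancel₀ _ hT'.ne'
  have hAβ : A * β * Real.exp (β * ε) = m := by simp only [A]; field_simp
  have hγβ : γ * (1 + m ^ 2) < β ^ 2 := by
    have : γ * (1 + m ^ 2) = β * (β - 1) := by simp only [γ, β]; field_simp; ring
    nlinarith
  have hexp : ∀ x ≤ ε, ∀ t ≤ t₀, β * x + γ * (t - t₀) ≤ β * ε := by
    intro x hx t ht
    nlinarith [mul_le_mul_of_nonneg_left hx (by positivity : (0:ℝ) ≤ β)]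
  refine ⟨A, β, γ, fun x hx => csfBarrier_nonpos hA.le ?_, fun t ht => csfBarrier_nonpos hA.le ?_,
    fun t ht => ?_, fun x hx t ht => csfBarrier_strictSubsolution hA (by positivity) hγ hγβ ?_,
    fun x hx => ?_⟩
  · nlinarith
  · nlinarith
  · calc csfBarrier A β γ t₀ ε t ≤ A * Real.exp (β * ε) := by
          unfold csfBarrier; nlinarith [Real.exp_le_exp.2 (hexp ε le_rfl t ht)]
      _ ≤ A * β * Real.exp (β * ε) := by nlinarith [Real.exp_pos (β * ε)]
      _ = m := hAβ
  · calc A * β * Real.exp (β * x + γ * (t - t₀)) ≤ A * β * Real.exp (β * ε) := by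
          gcongr; exact hexp x hx t ht
      _ = m := hAβ
  · have hβx : 0 < β * x + γ * (t₀ - t₀) := by simpa using mul_pos (by positivity) hx
    exact mul_pos hA (sub_pos.2 (Real.one_lt_exp_iff.2 hβx))

theorem max_principle_graphical_CSF_general
    (ε δ T : ℝ)
    (u : ℝ → ℝ → ℝ)
    (hcont : ContinuousOn (fun p : ℝ × ℝ => u p.1 p.2) (Icc 0 ε ×ˢ Icc T (T + δ)))
    (hx : ∀ t ∈ Ioc T (T + δ), ContDiffOn ℝ 2 (fun y => u y t) (Ioo 0 ε))
    (ht : ∀ x ∈ Ioo 0 ε, DifferentiableOn ℝ (fun s => u x s) (Ioc T (T + δ)))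
    (heq : ∀ x ∈ Ioo 0 ε, ∀ t ∈ Ioc T (T + δ),
      deriv (fun s => u x s) t =
        deriv (deriv (fun y => u y t)) x / (1 + (deriv (fun y => u y t) x) ^ 2))
    (hinit : ∀ x ∈ Icc 0 ε, 0 ≤ u x T)
    (hleft : ∀ t ∈ Ioc T (T + δ), 0 < u 0 t)
    (hright : ∀ t ∈ Icc T (T + δ), 0 < u ε t) :
    ∀ x ∈ Ioo 0 ε, ∀ t ∈ Ioc T (T + δ), 0 < u x t := by
  intro x₀ hx₀ t₀ ht₀
  have hε : 0 ≤ ε := (hx₀.1.trans hx₀.2).le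
  have hIoo : Ioo T t₀ ⊆ Ioc T (T + δ) := fun t ht => ⟨ht.1, ht.2.le.trans ht₀.2⟩
  have hIcc : Icc T t₀ ⊆ Icc T (T + δ) := Icc_subset_Icc_right ht₀.2
  obtain ⟨t₁, ht₁, hmin⟩ := isCompact_Icc.exists_isMinOn (nonempty_Icc.2 (ht₀.1.le.trans ht₀.2))
    (hcont.comp (Continuous.prodMk_right ε).continuousOn fun t ht => ⟨right_mem_Icc.2 hε, ht⟩)
  have hleft₀ : ∀ t ∈ Icc T t₀, 0 ≤ u 0 t := fun t ht => ht.1.eq_or_lt.elim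
    (fun h => h ▸ hinit 0 (left_mem_Icc.2 hε)) fun h => (hleft t ⟨h, ht.2.trans ht₀.2⟩).le
  obtain ⟨A, β, γ, hwbot, hwleft, hwright, hwsub, hwpos⟩ :=
    exists_csfBarrier hε ht₀.1 (hright t₁ ht₁)
  have hcomp := le_of_strictSubsolution_of_Ioo (F := fun p q => q / (1 + p ^ 2))
    (fun p _ _ h => div_le_div_of_nonneg_right h (by positivity))
    (hcont.mono (prod_mono_right hIcc)) (by unfold csfBarrier; fun_prop)
    (fun t ht => hx t (hIoo ht)) (fun t _ => by unfold csfBarrier; fun_prop)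
    (fun x hx t ht' => (ht x hx).differentiableAt (Ioc_mem_nhds ht'.1 (ht'.2.trans_le ht₀.2)))
    (fun x _ t _ => (hasDerivAt_csfBarrier_time x t).differentiableAt)
    (fun x hx t ht => heq x hx t (hIoo ht)) (fun x hx t ht => hwsub x hx.2.le t ht.2.le)
    (fun x hx => (hwbot x hx.2).trans (hinit x hx))
    (fun t ht => (hwleft t ht.2).trans (hleft₀ t ht))
    (fun t ht => (hwright t ht.2).trans (hmin (hIcc ht)))
  exact (hwpos x₀ hx₀.1).trans_le (hcomp x₀ (Ioo_subset_Icc_self hx₀) t₀ ⟨ht₀.1.le, le_rfl⟩)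

/-- Maximum principle for the graphical curve shortening equation
`u_t = u_xx / (1 + u_x²)` on the rectangle `[0,ε] × [T, T+δ]`:
if `u ≥ 0` at the initial time and `u > 0` on the lateral boundary,
then `u > 0` in the interior (up to the final time). -/
theorem max_principle_graphical_CSF
    (ε δ T : ℝ) (hε : 0 < ε) (hδ : 0 < δ)
    (u : ℝ → ℝ → ℝ)
    (hcont : ContinuousOn (fun p : ℝ × ℝ => u p.1 p.2) (Icc 0 ε ×ˢ Icc T (T + δ)))
    (hx : ∀ t ∈ Ioc T (T + δ), ContDiffOn ℝ 2 (fun y => u y t) (Ioo 0 ε))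
    (ht : ∀ x ∈ Ioo 0 ε, DifferentiableOn ℝ (fun s => u x s) (Ioc T (T + δ)))
    (heq : ∀ x ∈ Ioo 0 ε, ∀ t ∈ Ioc T (T + δ),
      deriv (fun s => u x s) t =
        deriv (deriv (fun y => u y t)) x / (1 + (deriv (fun y => u y t) x) ^ 2))
    (hinit : ∀ x ∈ Icc 0 ε, 0 ≤ u x T)
    (hleft : ∀ t ∈ Ioc T (T + δ), 0 < u 0 t)
    (hright : ∀ t ∈ Icc T (T + δ), 0 < u ε t) :
    ∀ x ∈ Ioo 0 ε, ∀ t ∈ Ioc T (T + δ), 0 < u x t :=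
  max_principle_graphical_CSF_general ε δ T u hcont hx ht heq hinit hleft hright
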